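/- Let ℓ ≥ 4, let ω ∈ ℂ be a primitive (2ℓ−2)-th root of unity, let ζ ∈ ℂ be nonzero, and let μ ∈ ℂ be nonzero. Let Λ(z) be the 2ℓ×2ℓ matrix ∑_{i=1}^{ℓ−1} (e_{i+1,i} + e_{2ℓ+1−i,2ℓ−i}) + (1/2)·(e_{ℓ+1,ℓ−1} + e_{ℓ+2,ℓ}) + (z/2)·(e_{1,2ℓ−1} + e_{2,2ℓ}), where e_{a,b} denotes the elementary matrix. For η ∈ ℂ nonzero set β_η := (1/2, η^{−1}, …, η^{−(ℓ−1)}, (1/2)·η^{−(ℓ−1)}, η^{−ℓ}, …, η^{−(2ℓ−2)})ᵀ (entries 2 through ℓ are η^{−1}, …, η^{−(ℓ−1)}; entry ℓ+1 is (1/2)η^{−(ℓ−1)}; entries ℓ+2 through 2ℓ are η^{−ℓ}, …, η^{−(2ℓ−2)}). Set β₀ := (ℓ−1)·(1/2, 0, …, 0, −μ^{−1}ζ^{−(ℓ−1)}, (2μ)^{−1}ζ^{−(ℓ−1)}, 0, …, 0, −ζ^{−(2ℓ−2)})ᵀ, whose only nonzero entries are at positions 1, ℓ, ℓ+1 and 2ℓ,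 and β₀′ the same vector with the entries at positions ℓ and ℓ+1 replaced by +μ^{−1}ζ^{−(ℓ−1)} and −(2μ)^{−1}ζ^{−(ℓ−1)}. Let P(ζ) := (1/(2ℓ−2))·(β_{ω⁰ζ}, β_{ωζ}, …, β_{ω^{2ℓ−3}ζ}, β₀, β₀′). Then P(ζ) is invertible and Λ(ζ^{2ℓ−2}) · P(ζ) = ζ · P(ζ) · D, where D = diag(1, ω, ω², …, ω^{2ℓ−3}, 0, 0). -/

import Mathlib

/-- The `2ℓ×2ℓ` matrix
`Λ(z) = ∑_{i=1}^{ℓ−1}(e_{i+1,i} + e_{2ℓ+1−i,2ℓ−i}) + (1/2)(e_{ℓ+1,ℓ−1} + e_{ℓ+2,ℓ})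
+ (z/2)(e_{1,2ℓ−1} + e_{2,2ℓ})` (one-indexed elementary matrices `e_{a,b}`). -/
noncomputable def LamMatD (l : ℕ) (z : ℂ) : Matrix (Fin (2*l)) (Fin (2*l)) ℂ :=
  Matrix.of fun a b =>
    (if ((1 ≤ (a : ℕ) ∧ (a : ℕ) ≤ l - 1) ∨ (l + 1 ≤ (a : ℕ) ∧ (a : ℕ) ≤ 2*l - 1))
        ∧ (b : ℕ) + 1 = (a : ℕ) then 1 else 0) +
    (if (a : ℕ) = l ∧ (b : ℕ) + 2 = l then 1 / 2 else 0) +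
    (if (a : ℕ) = l + 1 ∧ (b : ℕ) + 1 = l then 1 / 2 else 0) +
    (if (a : ℕ) = 0 ∧ (b : ℕ) = 2*l - 2 then z / 2 else 0) +
    (if (a : ℕ) = 1 ∧ (b : ℕ) = 2*l - 1 then z / 2 else 0)

/-- The column vector `β_η = (1/2, η^{−1}, …, η^{−(ℓ−1)}, (1/2)η^{−(ℓ−1)}, η^{−ℓ}, …,
η^{−(2ℓ−2)})ᵀ` (zero-indexed rows `0, 1, …, ℓ−1, ℓ, ℓ+1, …, 2ℓ−1`). -/
noncomputable def betaD (l : ℕ) (η : ℂ) : Fin (2*l) → ℂ := fun i =>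
  if (i : ℕ) = 0 then 1 / 2
  else if (i : ℕ) ≤ l - 1 then η ^ (-((i : ℕ) : ℤ))
  else if (i : ℕ) = l then (1 / 2) * η ^ (-((l : ℤ) - 1))
  else η ^ (-(((i : ℕ) : ℤ) - 1))

/-- The column vector `β₀ = (ℓ−1)·(1/2, 0, …, 0, −μ⁻¹ζ^{−(ℓ−1)}, (2μ)⁻¹ζ^{−(ℓ−1)}, 0,
…, 0, −ζ^{−(2ℓ−2)})ᵀ`, with nonzero entries at one-indexed positions `1, ℓ, ℓ+1, 2ℓ`. -/
noncomputable def betaD0 (l : ℕ) (μ ζ : ℂ) : Fin (2*l) → ℂ := fun i =>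
  ((l : ℂ) - 1) *
    (if (i : ℕ) = 0 then 1 / 2
     else if (i : ℕ) + 1 = l then -μ⁻¹ * ζ ^ (-((l : ℤ) - 1))
     else if (i : ℕ) = l then (2 * μ)⁻¹ * ζ ^ (-((l : ℤ) - 1))
     else if (i : ℕ) + 1 = 2*l then -(ζ ^ (-(2 * (l : ℤ) - 2)))
     else 0)

/-- The column vector `β₀′`, equal to `β₀` except that the entries at one-indexed
positions `ℓ` and `ℓ+1` are replaced by `+μ⁻¹ζ^{−(ℓ−1)}` and `−(2μ)⁻¹ζ^{−(ℓ−1)}`. -/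
noncomputable def betaD0' (l : ℕ) (μ ζ : ℂ) : Fin (2*l) → ℂ := fun i =>
  ((l : ℂ) - 1) *
    (if (i : ℕ) = 0 then 1 / 2
     else if (i : ℕ) + 1 = l then μ⁻¹ * ζ ^ (-((l : ℤ) - 1))
     else if (i : ℕ) = l then -((2 * μ)⁻¹ * ζ ^ (-((l : ℤ) - 1)))
     else if (i : ℕ) + 1 = 2*l then -(ζ ^ (-(2 * (l : ℤ) - 2)))
     else 0)

/-- The matrix `P(ζ) = (1/(2ℓ−2))·(β_{ω⁰ζ}, β_{ωζ}, …, β_{ω^{2ℓ−3}ζ}, β₀, β₀′)`. -/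
noncomputable def PmatD (l : ℕ) (ω μ ζ : ℂ) : Matrix (Fin (2*l)) (Fin (2*l)) ℂ :=
  Matrix.of fun i k =>
    (1 / (2 * (l : ℂ) - 2)) *
      (if (k : ℕ) < 2*l - 2 then betaD l (ω ^ (k : ℕ) * ζ) i
       else if (k : ℕ) = 2*l - 2 then betaD0 l μ ζ i
       else betaD0' l μ ζ i)

/-!
The columns of `P(ζ)` are eigenvectors of `Λ(ζ^{2ℓ−2})`. The matrix `Λ` shifts a vector one step
down, with the two corner entries `z/2` closing the cycle; hence `β_η` is an eigenvector with
eigenvalue `η` whenever `η^{2ℓ−2} = z`, as for every `η = ωᵏζ`, while `β₀` and `β₀′`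
lie in the kernel. Invertibility of `P(ζ)` follows since eigenvectors for the distinct nonzero
eigenvalues `ζωᵏ` are independent of each other and of the kernel, and `β₀`, `β₀′` are
independent as `μ ≠ 0`.
-/

open scoped Matrix

namespace Module.End

variable {K V ι : Type*} [Field K] [AddCommGroup V] [Module K V]

theorem linearIndepOn_union_of_hasEigenvector (f : End K V) {v : ι → V} {s t : Set ι}
    (eig : ι → K) (hs : ∀ i ∈ s, f.HasEigenvector (eig i) (v i)) (hinj : Set.InjOn eig s)
    {μ : K} (hne : ∀ i ∈ s, eig i ≠ μ) (ht : ∀ i ∈ t, v i ∈ f.eigenspace μ)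
    (hindep : LinearIndepOn K v t) : LinearIndepOn K v (s ∪ t) := by
  refine LinearIndepOn.union ?_ hindep ?_
  · exact f.eigenvectors_linearIndependent' (fun i : s ↦ eig i) (hinj.injective)
      (fun i : s ↦ v i) fun i ↦ hs i i.2
  · have hspan_s : Submodule.span K (v '' s) ≤ ⨆ ν ≠ μ, f.eigenspace ν := by
      rw [Submodule.span_le]
      rintro _ ⟨i, hi, rfl⟩
      exact Submodule.mem_iSup_of_mem (eig i) (Submodule.mem_iSup_of_mem (hne i hi) (hs i hi).1)
    have hspan_t : Submodule.span K (v '' t) ≤ f.eigenspace μ := by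
      rw [Submodule.span_le]
      rintro _ ⟨i, hi, rfl⟩
      exact ht i hi
    exact ((f.eigenspaces_iSupIndep μ).mono hspan_t hspan_s).symm

end Module.End

theorem Fin.sum_ite_and_mul_eq {R : Type*} [Semiring R] {n : ℕ} {p : Prop} [Decidable p]
    {q : Fin n → Prop} [DecidablePred q] (b₀ : Fin n) (hq : p → ∀ b, q b ↔ b = b₀) (c : R)
    (v : Fin n → R) : ∑ b, (if p ∧ q b then c else 0) * v b = if p then c * v b₀ else 0 := by
  split_ifs with hp
  · simp [hp, hq hp]
  · simp [hp]

theorem LamMatD_mulVec_apply {l : ℕ} (hl : 4 ≤ l) (z : ℂ) (v : Fin (2*l) → ℂ) (a : Fin (2*l)) :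
    (LamMatD l z *ᵥ v) a =
      (if (1 ≤ (a:ℕ) ∧ (a:ℕ) ≤ l - 1) ∨ (l + 1 ≤ (a:ℕ) ∧ (a:ℕ) ≤ 2*l - 1)
        then 1 * v ⟨(a:ℕ) - 1, by omega⟩ else 0) +
      (if (a:ℕ) = l then 1 / 2 * v ⟨l - 2, by omega⟩ else 0) +
      (if (a:ℕ) = l + 1 then 1 / 2 * v ⟨l - 1, by omega⟩ else 0) +
      (if (a:ℕ) = 0 then z / 2 * v ⟨2*l - 2, by omega⟩ else 0) +
      (if (a:ℕ) = 1 then z / 2 * v ⟨2*l - 1, by omega⟩ else 0) := by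
  simp only [Matrix.mulVec, dotProduct, LamMatD, Matrix.of_apply, add_mul, Finset.sum_add_distrib]
  rw [Fin.sum_ite_and_mul_eq ⟨(a:ℕ) - 1, by omega⟩, Fin.sum_ite_and_mul_eq ⟨l - 2, by omega⟩,
    Fin.sum_ite_and_mul_eq ⟨l - 1, by omega⟩, Fin.sum_ite_and_mul_eq ⟨2*l - 2, by omega⟩,
    Fin.sum_ite_and_mul_eq ⟨2*l - 1, by omega⟩]
  all_goals
    intro _ b
    simp only [Fin.ext_iff] <;> omega

theorem LamMatD_mulVec_betaD {l : ℕ} (hl : 4 ≤ l) {η : ℂ} (hη : η ≠ 0) :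
    LamMatD l (η ^ (2*l - 2)) *ᵥ betaD l η = η • betaD l η := by
  ext ⟨a, ha⟩
  rw [LamMatD_mulVec_apply hl, Pi.smul_apply, smul_eq_mul]
  simp only [betaD]
  obtain rfl | rfl | h | rfl | rfl | h :
      a = 0 ∨ a = 1 ∨ (2 ≤ a ∧ a ≤ l - 1) ∨ a = l ∨ a = l + 1 ∨ l + 2 ≤ a := by omega
  all_goals
    simp (disch := first | omega | assumption) only [if_pos, if_neg, if_true, Nat.cast_sub,
      pow_sub₀, zpow_neg, zpow_sub₀, zpow_natCast, Nat.cast_ofNat, Nat.cast_mul, Nat.cast_add,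
      Nat.cast_one, Nat.cast_zero, zpow_mul, zpow_ofNat, zpow_add₀]
    field_simp
    ring

theorem LamMatD_mulVec_betaD0_eq_zero {l : ℕ} (hl : 4 ≤ l) (μ : ℂ) {ζ : ℂ} (hζ : ζ ≠ 0) :
    LamMatD l (ζ ^ (2*l - 2)) *ᵥ betaD0 l μ ζ = 0 ∧
      LamMatD l (ζ ^ (2*l - 2)) *ᵥ betaD0' l μ ζ = 0 := by
  constructor
  all_goals
    ext ⟨a, ha⟩
    rw [LamMatD_mulVec_apply hl, Pi.zero_apply]
    simp only [betaD0, betaD0']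
    obtain rfl | rfl | h | rfl | rfl | h :
        a = 0 ∨ a = 1 ∨ (2 ≤ a ∧ a ≤ l - 1) ∨ a = l ∨ a = l + 1 ∨ l + 2 ≤ a := by omega
    all_goals
      simp (disch := first | omega | assumption) only [if_pos, if_neg, if_true,
        pow_sub₀, zpow_neg, zpow_sub₀, zpow_natCast, zpow_mul, zpow_ofNat]
      field_simp
      ring

theorem PmatD_col {l : ℕ} (ω μ ζ : ℂ) (k : Fin (2*l)) :
    (PmatD l ω μ ζ).col k = (1 / (2 * (l : ℂ) - 2)) •
      (if (k : ℕ) < 2*l - 2 then betaD l (ω ^ (k : ℕ) * ζ)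
       else if (k : ℕ) = 2*l - 2 then betaD0 l μ ζ else betaD0' l μ ζ) := by
  ext i
  simp only [Matrix.col_apply, PmatD, Matrix.of_apply, Pi.smul_apply, smul_eq_mul]
  split_ifs <;> rfl

theorem LamMatD_mulVec_PmatD_col {l : ℕ} (hl : 4 ≤ l) {ω ζ : ℂ} (hω : ω ^ (2*l - 2) = 1)
    (hζ : ζ ≠ 0) (μ : ℂ) (k : Fin (2*l)) :
    LamMatD l (ζ ^ (2*l - 2)) *ᵥ (PmatD l ω μ ζ).col k =
      (ζ * if (k : ℕ) < 2*l - 2 then ω ^ (k : ℕ) else 0) • (PmatD l ω μ ζ).col k := by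
  have hω0 : ω ≠ 0 := by
    rintro rfl
    rw [zero_pow (by omega)] at hω
    exact zero_ne_one hω
  rw [PmatD_col, Matrix.mulVec_smul]
  split_ifs with hk
  · have hpow : (ω ^ (k : ℕ) * ζ) ^ (2*l - 2) = ζ ^ (2*l - 2) := by
      rw [mul_pow, ← pow_mul, mul_comm (k : ℕ), pow_mul, hω, one_pow, one_mul]
    rw [← hpow, LamMatD_mulVec_betaD hl (mul_ne_zero (pow_ne_zero _ hω0) hζ), smul_comm,
      mul_comm ζ]
  · rw [(LamMatD_mulVec_betaD0_eq_zero hl μ hζ).1, mul_zero, zero_smul, smul_zero]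
  · rw [(LamMatD_mulVec_betaD0_eq_zero hl μ hζ).2, mul_zero, zero_smul, smul_zero]

theorem PmatD_linearIndepOn_kernel_cols {l : ℕ} (hl : 4 ≤ l) (ω : ℂ) {μ ζ : ℂ} (hμ : μ ≠ 0)
    (hζ : ζ ≠ 0) : LinearIndepOn ℂ (PmatD l ω μ ζ).col {k | ¬ (k : ℕ) < 2*l - 2} := by
  have hset : {k : Fin (2*l) | ¬ (k : ℕ) < 2*l - 2} =
      {⟨2*l - 2, by omega⟩, ⟨2*l - 1, by omega⟩} := by
    ext ⟨k, hk⟩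
    simp only [Set.mem_ofPred_eq, Set.mem_insert_iff, Set.mem_singleton_iff, Fin.ext_iff]
    omega
  rw [hset, LinearIndepOn.pair_iff _ (by simp [Fin.ext_iff]; omega)]
  intro c d hcd
  have e0 := congrFun hcd ⟨0, by omega⟩
  have e1 := congrFun hcd ⟨l - 1, by omega⟩
  simp (disch := omega) only [PmatD_col, betaD0, betaD0', Pi.add_apply, Pi.smul_apply,
    smul_eq_mul, if_pos, if_neg, if_true, Pi.zero_apply] at e0 e1
  have hl1 : (l : ℂ) - 1 ≠ 0 := by rw [sub_ne_zero]; norm_cast; omega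
  have hl2 : 2 * (l : ℂ) - 2 ≠ 0 := by rw [sub_ne_zero]; norm_cast; omega
  field_simp at e0 e1
  simp only [mul_zero, zero_mul, mul_eq_zero, zpow_ne_zero _ hζ, false_or] at e0 e1
  constructor
  · linear_combination (e0 - e1) / 2
  · linear_combination (e0 + e1) / 2

theorem PmatD_col_hasEigenvector {l : ℕ} (hl : 4 ≤ l) {ω ζ : ℂ} (hω : ω ^ (2*l - 2) = 1)
    (hζ : ζ ≠ 0) (μ : ℂ) {k : Fin (2*l)} (hk : (k : ℕ) < 2*l - 2) :
    Module.End.HasEigenvector (Matrix.toLin' (LamMatD l (ζ ^ (2*l - 2)))) (ζ * ω ^ (k : ℕ))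
      ((PmatD l ω μ ζ).col k) := by
  refine ⟨?_, fun h0 => ?_⟩
  · rw [Module.End.mem_eigenspace_iff, Matrix.toLin'_apply,
      LamMatD_mulVec_PmatD_col hl hω hζ, if_pos hk]
  · have h := congrFun h0 ⟨0, by omega⟩
    have hl2 : 2 * (l : ℂ) - 2 ≠ 0 := by rw [sub_ne_zero]; norm_cast; omega
    simp [PmatD, hk, betaD, hl2] at h

/-- for `ℓ ≥ 4`, `ω` a primitive `(2ℓ−2)`-th root of unity, `ζ ≠ 0` and
`μ ≠ 0`, the matrix `P(ζ)` is invertible and `Λ(ζ^{2ℓ−2}) · P(ζ) = ζ · P(ζ) · D` with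
`D = diag(1, ω, ω², …, ω^{2ℓ−3}, 0, 0)`. -/
theorem stmt_11 (l : ℕ) (hl : 4 ≤ l) (ω ζ μ : ℂ)
    (hω : IsPrimitiveRoot ω (2*l - 2)) (hζ : ζ ≠ 0) (hμ : μ ≠ 0) :
    IsUnit (PmatD l ω μ ζ) ∧
    LamMatD l (ζ ^ (2*l - 2)) * PmatD l ω μ ζ =
      ζ • (PmatD l ω μ ζ *
        Matrix.diagonal fun k : Fin (2*l) =>
          if (k : ℕ) < 2*l - 2 then ω ^ (k : ℕ) else 0) := by
  have hcol := LamMatD_mulVec_PmatD_col hl hω.pow_eq_one hζ μ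
  refine ⟨Matrix.linearIndependent_cols_iff_isUnit.mp ?_, Matrix.ext_col fun k => ?_⟩
  · rw [← linearIndepOn_univ_iff, ← Set.union_compl_self {k : Fin (2*l) | (k : ℕ) < 2*l - 2}]
    refine Module.End.linearIndepOn_union_of_hasEigenvector
      (Matrix.toLin' (LamMatD l (ζ ^ (2*l - 2))))
      (fun k => ζ * ω ^ (k : ℕ)) (fun k hk => PmatD_col_hasEigenvector hl hω.pow_eq_one hζ μ hk)
      (fun i hi j hj hij => Fin.ext (hω.pow_inj hi hj (mul_left_cancel₀ hζ hij)))
      (fun k _ => mul_ne_zero hζ (pow_ne_zero _ (hω.ne_zero (by omega)))) (fun k hk => ?_)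
      (PmatD_linearIndepOn_kernel_cols hl ω hμ hζ)
    rw [Module.End.mem_eigenspace_iff, Matrix.toLin'_apply, hcol,
      if_neg (show ¬ (k : ℕ) < 2*l - 2 from hk), mul_zero]
  · change LamMatD l (ζ ^ (2*l - 2)) *ᵥ (PmatD l ω μ ζ).col k = _
    ext i
    rw [hcol]
    simp [Matrix.col_apply, Matrix.mul_diagonal, mul_comm, mul_left_comm]
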